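/- Let x ∈ A, let n' ∈ {1,…,N}, and let δ > 1 be a real number such that δ·x_{n'} ∈ conv(𝒳). Define z ∈ ℂ^{N+1} by z_{n'} = δ·x_{n'} and z_n = x_n for all n ≠ n'. Then for every u ∈ {1,…,U} and every real λ > 0, f_u(z) − f_u(x) + λ‖z‖₁ − λ‖x‖₁ ≥ (λ − L_u)·(δ − 1)·|x_{n'}|. -/

import Mathlib

open Complex Finset

noncomputable section

/-- The set of `K`-th roots of unity in `ℂ`. -/
def rootsSet (K : ℕ) : Set ℂ :=
  {z : ℂ | ∃ k : ℕ, k < K ∧ z = Complex.exp ((2 * Real.pi * k / K : ℝ) * Complex.I)}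

/-- The convex hull (over `ℝ`) of the `K`-th roots of unity. -/
def hullSet (K : ℕ) : Set ℂ := convexHull ℝ (rootsSet K)

/-- The relaxed feasible set `A`. -/
def feasA (K N : ℕ) : Set (Fin (N + 1) → ℂ) :=
  {x | x 0 = 1 ∧ ∀ n : Fin (N + 1), n ≠ 0 → x n ∈ hullSet K}

/-- The discrete feasible set `D`. -/
def feasD (K N : ℕ) : Set (Fin (N + 1) → ℂ) :=
  {x | x 0 = 1 ∧ ∀ n : Fin (N + 1), n ≠ 0 → x n ∈ rootsSet K}

/-- The ℓ1 norm of a complex vector. -/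
def norm1 {N : ℕ} (x : Fin (N + 1) → ℂ) : ℝ := ∑ n, ‖x n‖

/-- The ℓ2 norm of a complex vector. -/
def norm2 {N : ℕ} (x : Fin (N + 1) → ℂ) : ℝ := Real.sqrt (∑ n, ‖x n‖ ^ 2)

/-- The (real) quadratic form `x^H C x`. -/
def quadForm {N : ℕ} (C : Matrix (Fin (N + 1)) (Fin (N + 1)) ℂ)
    (x : Fin (N + 1) → ℂ) : ℝ :=
  (dotProduct (star x) (Matrix.mulVec C x)).re

/-- The Frobenius norm of a complex matrix. -/
def frobNorm {N : ℕ} (M : Matrix (Fin (N + 1)) (Fin (N + 1)) ℂ) : ℝ :=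
  Real.sqrt (∑ i, ∑ j, ‖M i j‖ ^ 2)

/-- The SINR-type objective `f_u`. -/
def fObj {N U : ℕ} (C : Fin U → Fin U → Matrix (Fin (N + 1)) (Fin (N + 1)) ℂ)
    (σ : Fin U → ℝ) (u : Fin U) (x : Fin (N + 1) → ℂ) : ℝ :=
  quadForm (C u u) x /
    ((∑ u' ∈ Finset.univ.erase u, quadForm (C u u') x) + σ u ^ 2)

/-- The Lipschitz constant `L_u`. -/
def Lconst {N U : ℕ} (C : Fin U → Fin U → Matrix (Fin (N + 1)) (Fin (N + 1)) ℂ)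
    (σ : Fin U → ℝ) (u : Fin U) : ℝ :=
  2 * Real.sqrt ((N : ℝ) + 1) * frobNorm (C u u) / σ u ^ 2 *
    (1 + ((N : ℝ) + 1) * frobNorm (∑ u' ∈ Finset.univ.erase u, C u u') / σ u ^ 2)

/-- The minimum of the `f_u` over all users. -/
def minObj {N U : ℕ} (C : Fin U → Fin U → Matrix (Fin (N + 1)) (Fin (N + 1)) ℂ)
    (σ : Fin U → ℝ) (x : Fin (N + 1) → ℂ) : ℝ :=
  ⨅ u : Fin U, fObj C σ u x

/-- The penalized objective `f_0`. -/
def f0 {N U : ℕ} (C : Fin U → Fin U → Matrix (Fin (N + 1)) (Fin (N + 1)) ℂ)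
    (σ : Fin U → ℝ) (lam : ℝ) (x : Fin (N + 1) → ℂ) : ℝ :=
  minObj C σ x + lam * norm1 x


/-!
Both entries `x n'` and `δ x n'` lie in the convex hull of the roots of unity, so every vector
involved has entries of modulus at most one. On such vectors a quadratic form `y ↦ yᴴ M y` is
bounded by `(N+1)‖M‖_F` and, when a single entry moves by `e`, changes by at most
`2√(N+1)‖M‖_F |e|` (Cauchy–Schwarz on a row and a column of `M`). The denominators of `f_u`
stay above `σ_u²` because the interference matrices are positive semidefinite, so a quotient
rule estimate yields `f_u(z) - f_u(x) ≥ -L_u (δ-1)|x_{n'}|`, while scaling the entry `x_{n'}`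
by `δ` raises the ℓ1 norm by exactly `(δ-1)|x_{n'}|`.
-/

open Matrix Function

lemma norm_le_one_of_mem_hullSet {K : ℕ} {w : ℂ} (hw : w ∈ hullSet K) : ‖w‖ ≤ 1 := by
  have hroots : rootsSet K ⊆ Metric.closedBall 0 1 := by
    rintro z ⟨k, -, rfl⟩
    simp [Complex.norm_exp]
  simpa using convexHull_min hroots (convex_closedBall 0 1) hw

lemma norm_le_one_of_mem_feasA {K N : ℕ} {x : Fin (N + 1) → ℂ} (hx : x ∈ feasA K N)
    (n : Fin (N + 1)) : ‖x n‖ ≤ 1 := by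
  rcases eq_or_ne n 0 with rfl | hn
  · simp [hx.1]
  · exact norm_le_one_of_mem_hullSet (hx.2 n hn)

lemma sum_le_sqrt_card_mul_sqrt_sum_sq {ι : Type*} (s : Finset ι) (f : ι → ℝ) :
    ∑ i ∈ s, f i ≤ √(#s : ℝ) * √(∑ i ∈ s, f i ^ 2) := by
  simpa using Real.sum_mul_le_sqrt_mul_sqrt s (fun _ => 1) f

lemma norm_mulVec_apply_le {m n : Type*} [Fintype n] (M : Matrix m n ℂ) {v : n → ℂ}
    (hv : ∀ j, ‖v j‖ ≤ 1) (i : m) : ‖(M *ᵥ v) i‖ ≤ ∑ j, ‖M i j‖ :=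
  (norm_sum_le _ _).trans <| sum_le_sum fun j _ => by
    rw [norm_mul]
    exact mul_le_of_le_one_right (norm_nonneg _) (hv j)

lemma norm_star_dotProduct_mulVec_le {n : Type*} [Fintype n] (M : Matrix n n ℂ) {y v : n → ℂ}
    (hy : ∀ i, ‖y i‖ ≤ 1) (hv : ∀ j, ‖v j‖ ≤ 1) :
    ‖star y ⬝ᵥ (M *ᵥ v)‖ ≤ ∑ i, ∑ j, ‖M i j‖ :=
  (norm_sum_le _ _).trans <| sum_le_sum fun i _ => by
    rw [norm_mul, Pi.star_apply, norm_star]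
    exact (mul_le_of_le_one_left (norm_nonneg _) (hy i)).trans (norm_mulVec_apply_le M hv i)

section FiniteDim

variable {N : ℕ} (M : Matrix (Fin (N + 1)) (Fin (N + 1)) ℂ)

lemma frobNorm_transpose : frobNorm Mᵀ = frobNorm M := by
  rw [frobNorm, frobNorm, sum_comm]
  rfl

lemma sum_norm_row_le (i : Fin (N + 1)) :
    ∑ j, ‖M i j‖ ≤ √((N : ℝ) + 1) * frobNorm M := by
  refine (sum_le_sqrt_card_mul_sqrt_sum_sq univ _).trans ?_
  gcongr
  · simp
  · exact Real.sqrt_le_sqrt <|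
      single_le_sum (f := fun i => ∑ j, ‖M i j‖ ^ 2) (fun _ _ => by positivity) (mem_univ i)

lemma sum_sum_norm_le : ∑ i, ∑ j, ‖M i j‖ ≤ ((N : ℝ) + 1) * frobNorm M := by
  have h := sum_le_sqrt_card_mul_sqrt_sum_sq (univ ×ˢ univ) fun p => ‖M p.1 p.2‖
  rw [sum_product, sum_product, card_product, card_univ, Fintype.card_fin, Nat.cast_mul,
    Real.sqrt_mul_self (by positivity)] at h
  simpa [frobNorm] using h

lemma abs_quadForm_le {y : Fin (N + 1) → ℂ} (hy : ∀ n, ‖y n‖ ≤ 1) :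
    |quadForm M y| ≤ ((N : ℝ) + 1) * frobNorm M :=
  (abs_re_le_norm _).trans <| (norm_star_dotProduct_mulVec_le M hy hy).trans (sum_sum_norm_le M)

lemma quadForm_update_sub (x : Fin (N + 1) → ℂ) (n : Fin (N + 1)) (c : ℂ) :
    quadForm M (update x n c) - quadForm M x =
      (star (c - x n) * (M *ᵥ update x n c) n + (star x ᵥ* M) n * (c - x n)).re := by
  have hdiff : update x n c - x = Pi.single n (c - x n) := by
    ext j
    rcases eq_or_ne j n with rfl | hj <;> simp [*]
  set z := update x n c
  have hsplit : star z ⬝ᵥ (M *ᵥ z) - star x ⬝ᵥ (M *ᵥ x) =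
      star (z - x) ⬝ᵥ (M *ᵥ z) + star x ⬝ᵥ (M *ᵥ (z - x)) := by
    simp only [star_sub, sub_dotProduct, mulVec_sub, dotProduct_sub]
    ring
  rw [quadForm, quadForm, ← Complex.sub_re, hsplit, hdiff, ← Pi.single_star, single_dotProduct,
    dotProduct_mulVec, dotProduct_single]

lemma abs_quadForm_update_sub_le {x : Fin (N + 1) → ℂ} (hx : ∀ j, ‖x j‖ ≤ 1) (n : Fin (N + 1))
    {c : ℂ} (hc : ‖c‖ ≤ 1) :
    |quadForm M (update x n c) - quadForm M x| ≤
      2 * √((N : ℝ) + 1) * frobNorm M * ‖c - x n‖ := by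
  have hz : ∀ j, ‖update x n c j‖ ≤ 1 := fun j => by
    rcases eq_or_ne j n with rfl | hj <;> simp [*]
  have hrow : ‖(M *ᵥ update x n c) n‖ ≤ √((N : ℝ) + 1) * frobNorm M :=
    (norm_mulVec_apply_le M hz n).trans (sum_norm_row_le M n)
  have hcol : ‖(star x ᵥ* M) n‖ ≤ √((N : ℝ) + 1) * frobNorm M := by
    rw [← mulVec_transpose, ← frobNorm_transpose]
    exact (norm_mulVec_apply_le Mᵀ (fun j => by simpa using hx j) n).trans (sum_norm_row_le Mᵀ n)
  rw [quadForm_update_sub]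
  refine (abs_re_le_norm _).trans ((norm_add_le _ _).trans ?_)
  rw [norm_mul, norm_mul, norm_star]
  nlinarith [norm_nonneg (c - x n)]

lemma quadForm_sum {ι : Type*} (s : Finset ι) (A : ι → Matrix (Fin (N + 1)) (Fin (N + 1)) ℂ)
    (x : Fin (N + 1) → ℂ) : quadForm (∑ i ∈ s, A i) x = ∑ i ∈ s, quadForm (A i) x := by
  simp only [quadForm, sum_mulVec, dotProduct_sum, Complex.re_sum]

open scoped ComplexOrder in
lemma quadForm_vecMulVec_self_star_nonneg (a x : Fin (N + 1) → ℂ) :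
    0 ≤ quadForm (vecMulVec a (star a)) x :=
  (Complex.nonneg_iff.mp ((posSemidef_vecMulVec_self_star a).dotProduct_mulVec_nonneg x)).1

lemma quadForm_sum_vecMulVec_nonneg {ι : Type*} (s : Finset ι) (a : ι → Fin (N + 1) → ℂ)
    (x : Fin (N + 1) → ℂ) : 0 ≤ quadForm (∑ i ∈ s, vecMulVec (a i) (star (a i))) x := by
  rw [quadForm_sum]
  exact sum_nonneg fun i _ => quadForm_vecMulVec_self_star_nonneg (a i) x

lemma norm1_update_add (x : Fin (N + 1) → ℂ) (n : Fin (N + 1)) (c : ℂ) :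
    norm1 (update x n c) + ‖x n‖ = norm1 x + ‖c‖ := by
  rw [norm1, norm1, ← add_sum_erase _ _ (mem_univ n), ← add_sum_erase _ _ (mem_univ n),
    update_self, sum_congr rfl fun j hj => by rw [update_of_ne (ne_of_mem_erase hj)]]
  ring

end FiniteDim

lemma neg_add_le_div_add_sub_div_add {g₀ g₁ q₀ q₁ s G a b : ℝ} (hs : 0 < s) (hg₀ : 0 ≤ g₀)
    (hg₀G : g₀ ≤ G) (hq₀ : 0 ≤ q₀) (hq₁ : 0 ≤ q₁) (hg : |g₁ - g₀| ≤ a) (hq : |q₁ - q₀| ≤ b) :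
    -(a / s + G * b / s ^ 2) ≤ g₁ / (q₁ + s) - g₀ / (q₀ + s) := by
  obtain ⟨hg', -⟩ := abs_le.mp hg
  obtain ⟨-, hq'⟩ := abs_le.mp hq
  have hb : 0 ≤ b := (abs_nonneg _).trans hq
  have hH₀ : s ≤ q₀ + s := le_add_of_nonneg_left hq₀
  have hH₁ : s ≤ q₁ + s := le_add_of_nonneg_left hq₁
  have hsplit : g₁ / (q₁ + s) - g₀ / (q₀ + s) =
      (g₁ - g₀) / (q₁ + s) + g₀ * (q₀ - q₁) / ((q₁ + s) * (q₀ + s)) := by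
    field_simp
    ring
  have hnum : -(a / s) ≤ (g₁ - g₀) / (q₁ + s) := by
    calc -(a / s) ≤ -a / (q₁ + s) := by
          rw [neg_div]
          exact neg_le_neg (div_le_div_of_nonneg_left ((abs_nonneg _).trans hg) hs hH₁)
      _ ≤ (g₁ - g₀) / (q₁ + s) := by gcongr
  have hden : -(G * b / s ^ 2) ≤ g₀ * (q₀ - q₁) / ((q₁ + s) * (q₀ + s)) := by
    calc -(G * b / s ^ 2) ≤ -(g₀ * b) / ((q₁ + s) * (q₀ + s)) := by
          rw [neg_div, sq]
          exact neg_le_neg (div_le_div₀ (mul_nonneg (hg₀.trans hg₀G) hb) (by gcongr) (by positivity)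
            (by gcongr))
      _ ≤ g₀ * (q₀ - q₁) / ((q₁ + s) * (q₀ + s)) := by
          gcongr
          nlinarith
  linarith

theorem stmt5_general
    (K N U : ℕ)
    (a : Fin U → Fin U → (Fin (N + 1) → ℂ))
    (C : Fin U → Fin U → Matrix (Fin (N + 1)) (Fin (N + 1)) ℂ)
    (hC : ∀ u u' : Fin U, C u u' = Matrix.vecMulVec (a u u') (star (a u u')))
    (σ : Fin U → ℝ) (hσ : ∀ u, 0 < σ u)
    (x : Fin (N + 1) → ℂ) (hxA : x ∈ feasA K N)
    (n' : Fin (N + 1))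
    (δ : ℝ) (hδ : 1 < δ) (hδx : (δ : ℂ) * x n' ∈ hullSet K)
    (u : Fin U) (lam : ℝ) :
    fObj C σ u (Function.update x n' ((δ : ℂ) * x n')) - fObj C σ u x +
        lam * norm1 (Function.update x n' ((δ : ℂ) * x n')) - lam * norm1 x ≥
      (lam - Lconst C σ u) * (δ - 1) * ‖x n'‖ := by
  have hx := norm_le_one_of_mem_feasA hxA
  have hc := norm_le_one_of_mem_hullSet hδx
  have hstep : ‖(δ : ℂ) * x n' - x n'‖ = (δ - 1) * ‖x n'‖ := by
    rw [← sub_one_mul, norm_mul, ← Complex.ofReal_one, ← Complex.ofReal_sub, Complex.norm_real,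
      Real.norm_of_nonneg (by linarith)]
  have hnorm1 := norm1_update_add x n' ((δ : ℂ) * x n')
  rw [norm_mul, Complex.norm_real, Real.norm_of_nonneg (by linarith)] at hnorm1
  simp only [fObj, ← quadForm_sum]
  set S := ∑ u' ∈ univ.erase u, C u u'
  have hS (y) : 0 ≤ quadForm S y := by
    simp only [S, hC]
    exact quadForm_sum_vecMulVec_nonneg _ (a u) y
  have hf := neg_add_le_div_add_sub_div_add (pow_pos (hσ u) 2)
    (by rw [hC]; exact quadForm_vecMulVec_self_star_nonneg _ x)
    ((le_abs_self _).trans (abs_quadForm_le (C u u) hx)) (hS _) (hS _)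
    (abs_quadForm_update_sub_le (C u u) hx n' hc) (abs_quadForm_update_sub_le S hx n' hc)
  have hL : Lconst C σ u * ((δ - 1) * ‖x n'‖) =
      2 * √((N : ℝ) + 1) * frobNorm (C u u) * ((δ - 1) * ‖x n'‖) / σ u ^ 2 +
        ((N : ℝ) + 1) * frobNorm (C u u) *
          (2 * √((N : ℝ) + 1) * frobNorm S * ((δ - 1) * ‖x n'‖)) / (σ u ^ 2) ^ 2 := by
    have hσu := (hσ u).ne'
    simp only [Lconst, S]
    field_simp
  rw [hstep, ← hL] at hf
  linear_combination hf - lam * hnorm1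

theorem stmt5
    (K N U : ℕ) (hK : 2 ≤ K) (hN : 1 ≤ N) (hU : 1 ≤ U)
    (a : Fin U → Fin U → (Fin (N + 1) → ℂ))
    (C : Fin U → Fin U → Matrix (Fin (N + 1)) (Fin (N + 1)) ℂ)
    (hC : ∀ u u' : Fin U, C u u' = Matrix.vecMulVec (a u u') (star (a u u')))
    (σ : Fin U → ℝ) (hσ : ∀ u, 0 < σ u)
    (x : Fin (N + 1) → ℂ) (hxA : x ∈ feasA K N)
    (n' : Fin (N + 1)) (hn' : n' ≠ 0)
    (δ : ℝ) (hδ : 1 < δ) (hδx : (δ : ℂ) * x n' ∈ hullSet K)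
    (u : Fin U) (lam : ℝ) (hlam : 0 < lam) :
    fObj C σ u (Function.update x n' ((δ : ℂ) * x n')) - fObj C σ u x +
        lam * norm1 (Function.update x n' ((δ : ℂ) * x n')) - lam * norm1 x ≥
      (lam - Lconst C σ u) * (δ - 1) * ‖x n'‖ :=
  stmt5_general K N U a C hC σ hσ x hxA n' δ hδ hδx u lam
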